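/- Let μ be a dominant integral coweight, and let λ be an integral coweight such that μ − u(λ) is a ℤ_{≥0}-linear combination of positive coroots for every u ∈ W₀. Let λ_d be the dominant element of the orbit W₀λ, write λ = w''(λ_d) with w'' ∈ W₀ the minimal coset representative for λ_d, and set ℓ^{λ_d}(w'') := Σ_{α ∈ Φ⁺ with w''(α) ∈ −Φ⁺} ⟨α, λ_d⟩ and ht(μ − λ_d) := ⟨ρ, μ − λ_d⟩. Then ⟨ρ, μ + λ⟩ = ℓ(t_μ) − ht(μ − λ_d) − ℓ^{λ_d}(w'') = ht(μ − λ_d) + N_{λ_d,w''}, where ℓ(t_μ) is the number of pairs (α, n) ∈ Φ⁺ × ℤ with H_{α,n} separating A and A + μ, and N_{λ_d,w''} is the number of pairs (α, n) ∈ Φ⁺ × ℤ with H_{α,n} separating C and x_{w''}(A), with x_{w''} := t_{−w''(λ_d)}w''. Furthermore, for every minimal coset representative w ∈ W₀ for μ, ℓ(x_w) − ⟨ρ, μ + λ⟩ = ht(μ − λ_d) + ℓ^{λ_d}(w'') − ℓ(w), where x_w := t_{−w(μ)}w. -/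

import Mathlib

/-!
Common framework: a finite crystallographic reduced root system `Φ` inside the dual
of a finite-dimensional real vector space `V`, with a choice of positive roots `Pos`,
simple roots `Delta`, coroots, and the finite Weyl group `W` (a subgroup of linear
automorphisms of `V` generated by the root reflections).  We also set up affine
hyperplanes, the fundamental alcove, separation counts, and alcove walks.
-/

open Module Finset

section BasicDefs

variable {V : Type*} [AddCommGroup V] [Module ℝ V]

/-- The affine transformation `t_ν u : v ↦ u(v) + ν`. -/
def affT (ν : V) (u : V ≃ₗ[ℝ] V) : V → V := fun v => u v + ν

/-- The affine hyperplane `H_{α,n} = {v : ⟨α, v⟩ = n}`. -/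
def affHyp (α : Dual ℝ V) (n : ℤ) : Set V := {v | α v = (n : ℝ)}

/-- `H_{α,n}` separates `S` and `T`: the affine functional `⟨α, ·⟩ - n` is strictly
positive everywhere on one of the two sets and strictly negative everywhere on the other. -/
def SepBy (α : Dual ℝ V) (n : ℤ) (S T : Set V) : Prop :=
  ((∀ v ∈ S, α v < (n : ℝ)) ∧ ∀ v ∈ T, (n : ℝ) < α v) ∨
  ((∀ v ∈ S, (n : ℝ) < α v) ∧ ∀ v ∈ T, α v < (n : ℝ))

/-- The contragredient action of `w` on `V*`:  `(w · α)(v) = α (w⁻¹ v)`. -/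
def dAct (w : V ≃ₗ[ℝ] V) (α : Dual ℝ V) : Dual ℝ V := α.comp w.symm.toLinearMap

end BasicDefs

/-- A finite crystallographic reduced root system spanning the dual of `V`, together
with a system of positive roots, the simple roots, the coroots and the Weyl group. -/
structure RootSystemCtx (V : Type*) [AddCommGroup V] [Module ℝ V]
    [FiniteDimensional ℝ V] where
  Φ : Finset (Dual ℝ V)
  Pos : Finset (Dual ℝ V)
  Delta : Finset (Dual ℝ V)
  coroot : Dual ℝ V → V
  W : Subgroup (V ≃ₗ[ℝ] V)
  pos_subset : Pos ⊆ Φ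
  delta_subset : Delta ⊆ Pos
  root_ne_zero : ∀ α ∈ Φ, α ≠ 0
  span_eq_top : Submodule.span ℝ (Φ : Set (Dual ℝ V)) = ⊤
  pos_partition : ∀ α ∈ Φ, (α ∈ Pos ∧ -α ∉ Pos) ∨ (-α ∈ Pos ∧ α ∉ Pos)
  coroot_self : ∀ α ∈ Φ, α (coroot α) = 2
  crystallographic : ∀ α ∈ Φ, ∀ β ∈ Φ, ∃ n : ℤ, β (coroot α) = (n : ℝ)
  reduced : ∀ α ∈ Φ, ∀ c : ℝ, c • α ∈ Φ → c = 1 ∨ c = -1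
  root_reflect_mem : ∀ α ∈ Φ, ∀ β ∈ Φ, β - β (coroot α) • α ∈ Φ
  delta_indep : LinearIndependent ℝ (fun x : {a : Dual ℝ V // a ∈ Delta} => x.1)
  pos_of_delta : ∀ α ∈ Pos, ∃ c : Dual ℝ V → ℕ, α = ∑ β ∈ Delta, (c β : ℝ) • β
  W_gen : W = Subgroup.closure
    {g : V ≃ₗ[ℝ] V | ∃ α ∈ Φ, ∀ v : V, g v = v - α v • coroot α}

namespace RootSystemCtx

variable {V : Type*} [AddCommGroup V] [Module ℝ V] [FiniteDimensional ℝ V]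

section CtxDefs

variable (C : RootSystemCtx V)

/-- `ρ`, the half sum of the positive roots. -/
noncomputable def rho : Dual ℝ V := (2⁻¹ : ℝ) • ∑ α ∈ C.Pos, α

open Classical in
/-- The inversion set `{α ∈ Φ⁺ : w(α) ∈ -Φ⁺}` of `w`. -/
noncomputable def invSet (w : V ≃ₗ[ℝ] V) : Finset (Dual ℝ V) :=
  C.Pos.filter fun α => -(dAct w α) ∈ C.Pos

/-- The length `ℓ(w) = #{α ∈ Φ⁺ : w(α) ∈ -Φ⁺}`. -/
noncomputable def len (w : V ≃ₗ[ℝ] V) : ℕ := (C.invSet w).card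

/-- `lam` is an integral coweight: `⟨α, lam⟩ ∈ ℤ` for all roots `α`. -/
def IsIntegral (lam : V) : Prop := ∀ α ∈ C.Φ, ∃ n : ℤ, α lam = (n : ℝ)

/-- `lam` is dominant: `⟨α, lam⟩ ≥ 0` for all positive roots `α`. -/
def IsDominant (lam : V) : Prop := ∀ α ∈ C.Pos, 0 ≤ α lam

/-- `w` is a minimal(-length) coset representative for `lam`, i.e. `w ∈ W₀` and
`ℓ(w) ≤ ℓ(v)` for every `v ∈ w W_{0,lam}`. -/
def IsMinRep (w : V ≃ₗ[ℝ] V) (lam : V) : Prop :=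
  w ∈ C.W ∧ ∀ u ∈ C.W, u lam = lam → C.len w ≤ C.len (w * u)

/-- The (open) fundamental alcove `A`. -/
def alcove : Set V := {v | ∀ α ∈ C.Pos, 0 < α v ∧ α v < 1}

/-- The closure of the fundamental alcove. -/
def closedAlcove : Set V := {v | ∀ α ∈ C.Pos, 0 ≤ α v ∧ α v ≤ 1}

/-- The open dominant Weyl chamber `C`. -/
def chamber : Set V := {v | ∀ α ∈ C.Pos, 0 < α v}

/-- The number of affine hyperplanes `H_{α,n}` (`α ∈ Φ⁺`, `n ∈ ℤ`) separating `S` and `T`. -/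
noncomputable def sepCount (S T : Set V) : ℕ :=
  Set.ncard {p : Dual ℝ V × ℤ | p.1 ∈ C.Pos ∧ SepBy p.1 p.2 S T}

/-- The length of an affine transformation: the number of affine hyperplanes
separating `A` and `f(A)`. -/
noncomputable def affLen (f : V → V) : ℕ := C.sepCount C.alcove (f '' C.alcove)

/-- The coroot lattice `Q^∨`. -/
def Qv : AddSubgroup V := AddSubgroup.closure (C.coroot '' (C.Φ : Set (Dual ℝ V)))

/-- `b` is an alcove: a transform of the fundamental alcove under the affine Weyl
group `Q^∨ ⋊ W₀`. -/
def IsAlcoveSet (b : Set V) : Prop := ∃ ν ∈ C.Qv, ∃ u ∈ C.W, b = affT ν u '' C.alcove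

/-- The affine reflection through the hyperplane `H_{α,n}`. -/
def reflH (α : Dual ℝ V) (n : ℤ) : V → V := fun v => v - (α v - (n : ℝ)) • C.coroot α

/-- `H_{α,n}` (with `α ∈ Φ⁺`) supports a codimension-one face of the alcove `b`:
it is the unique affine hyperplane separating `b` from its reflection through `H_{α,n}`. -/
def IsWall (α : Dual ℝ V) (n : ℤ) (b : Set V) : Prop :=
  α ∈ C.Pos ∧ SepBy α n b (C.reflH α n '' b) ∧
    ∀ β ∈ C.Pos, ∀ m : ℤ, SepBy β m b (C.reflH α n '' b) → β = α ∧ m = n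

open Classical in
/-- `Φ_M = Φ ∩ ℤΔ_M`, the roots of the Levi attached to `Δ_M ⊆ Δ`. -/
noncomputable def PhiM (ΔM : Finset (Dual ℝ V)) : Finset (Dual ℝ V) :=
  C.Φ.filter fun α => α ∈ Submodule.span ℤ (ΔM : Set (Dual ℝ V))

/-- `W_{0,M}`, the subgroup of `W₀` generated by the reflections in the roots of `Φ_M`. -/
def WM (ΔM : Finset (Dual ℝ V)) : Subgroup (V ≃ₗ[ℝ] V) :=
  Subgroup.closure {g : V ≃ₗ[ℝ] V | ∃ α ∈ C.PhiM ΔM, ∀ v : V, g v = v - α v • C.coroot α}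

/-- `lam` is `M`-dominant: `⟨β, lam⟩ ≥ 0` for every `β ∈ Φ_M⁺ = Φ_M ∩ Φ⁺`. -/
def IsMDominant (ΔM : Finset (Dual ℝ V)) (lam : V) : Prop :=
  ∀ β, β ∈ C.PhiM ΔM → β ∈ C.Pos → 0 ≤ β lam

end CtxDefs

/-- An alcove walk of length `len`, starting at the fundamental alcove: at each step
`i < len` we are given a wall `H_{root i, lev i}` of the alcove `alc i`, and
`alc (i+1)` is either `alc i` (a folding) or its reflection through that wall (a crossing). -/
structure Walk (C : RootSystemCtx V) where
  len : ℕ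
  alc : ℕ → Set V
  root : ℕ → Dual ℝ V
  lev : ℕ → ℤ
  start : alc 0 = C.alcove
  isAlcove : ∀ i ≤ len, C.IsAlcoveSet (alc i)
  wall : ∀ i < len, C.IsWall (root i) (lev i) (alc i)
  step : ∀ i < len, alc (i + 1) = alc i ∨ alc (i + 1) = C.reflH (root i) (lev i) '' alc i

namespace Walk

variable {C : RootSystemCtx V}

/-- Step `i` is a folding. -/
def IsFolding (Wk : Walk C) (i : ℕ) : Prop := Wk.alc (i + 1) = Wk.alc i

/-- Step `i` is a crossing. -/
def IsCrossing (Wk : Walk C) (i : ℕ) : Prop := Wk.alc (i + 1) ≠ Wk.alc i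

/-- The affine functional of step `i` is positive on the current alcove
(positivity for the dominant orientation). -/
def PosAt (Wk : Walk C) (i : ℕ) : Prop := ∀ v ∈ Wk.alc i, (Wk.lev i : ℝ) < Wk.root i v

/-- The affine functional of step `i` is negative on the current alcove. -/
def NegAt (Wk : Walk C) (i : ℕ) : Prop := ∀ v ∈ Wk.alc i, Wk.root i v < (Wk.lev i : ℝ)

open Classical in
/-- `c⁺`: the number of crossings positive for the dominant orientation. -/
noncomputable def cPlus (Wk : Walk C) : ℕ :=
  ((Finset.range Wk.len).filter fun i => Wk.IsCrossing i ∧ Wk.PosAt i).card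

open Classical in
/-- `f⁺`: the number of foldings. -/
noncomputable def fPlus (Wk : Walk C) : ℕ :=
  ((Finset.range Wk.len).filter fun i => Wk.IsFolding i).card

/-- Positively folded for the dominant orientation. -/
def PosFolded (Wk : Walk C) : Prop := ∀ i < Wk.len, Wk.IsFolding i → Wk.NegAt i

/-- Positivity of step `i` for the parabolic orientation attached to the Levi root
set `ΦM`: for `α ∉ Φ_M` positivity on the current alcove; for `α ∈ Φ_M` the sign on
the current alcove agrees with the sign on the fundamental alcove. -/
def PosAtP (Wk : Walk C) (ΦM : Finset (Dual ℝ V)) (i : ℕ) : Prop :=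
  (Wk.root i ∉ ΦM ∧ Wk.PosAt i) ∨
  (Wk.root i ∈ ΦM ∧
    ((Wk.PosAt i ∧ ∀ v ∈ C.alcove, (Wk.lev i : ℝ) < Wk.root i v) ∨
     (Wk.NegAt i ∧ ∀ v ∈ C.alcove, Wk.root i v < (Wk.lev i : ℝ))))

/-- Negativity of step `i` for the parabolic orientation attached to `ΦM`. -/
def NegAtP (Wk : Walk C) (ΦM : Finset (Dual ℝ V)) (i : ℕ) : Prop :=
  (Wk.root i ∉ ΦM ∧ Wk.NegAt i) ∨
  (Wk.root i ∈ ΦM ∧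
    ((Wk.PosAt i ∧ ∀ v ∈ C.alcove, Wk.root i v < (Wk.lev i : ℝ)) ∨
     (Wk.NegAt i ∧ ∀ v ∈ C.alcove, (Wk.lev i : ℝ) < Wk.root i v)))

open Classical in
/-- `c⁺` for the parabolic orientation attached to `ΦM`. -/
noncomputable def cPlusP (Wk : Walk C) (ΦM : Finset (Dual ℝ V)) : ℕ :=
  ((Finset.range Wk.len).filter fun i => Wk.IsCrossing i ∧ Wk.PosAtP ΦM i).card

/-- Positively folded for the parabolic orientation attached to `ΦM`. -/
def PosFoldedP (Wk : Walk C) (ΦM : Finset (Dual ℝ V)) : Prop :=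
  ∀ i < Wk.len, Wk.IsFolding i → Wk.NegAtP ΦM i

/-- A minimal gallery from the fundamental alcove to `b`: all steps are crossings,
it ends at `b`, and its length is the number of hyperplanes separating `A` and `b`. -/
def IsMinGallery (Wk : Walk C) (b : Set V) : Prop :=
  (∀ i < Wk.len, Wk.IsCrossing i) ∧ Wk.alc Wk.len = b ∧
    Wk.len = C.sepCount C.alcove b

/-- Two walks have the same type: same length and, at each step, the pullbacks of the
crossed/folded hyperplanes to the fundamental alcove coincide. -/
def SameType (Wk G : Walk C) : Prop :=
  Wk.len = G.len ∧ ∀ i < Wk.len,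
    ∃ ν₁ ∈ C.Qv, ∃ u₁ ∈ C.W, ∃ ν₂ ∈ C.Qv, ∃ u₂ ∈ C.W,
      Wk.alc i = affT ν₁ u₁ '' C.alcove ∧ G.alc i = affT ν₂ u₂ '' C.alcove ∧
      affT ν₁ u₁ ⁻¹' affHyp (Wk.root i) (Wk.lev i) =
        affT ν₂ u₂ ⁻¹' affHyp (G.root i) (G.lev i)

/-- The walk terminates at `v₀`: `v₀` lies in the closure of the final alcove. -/
def Terminates (Wk : Walk C) (v₀ : V) : Prop :=
  ∃ ν ∈ C.Qv, ∃ u ∈ C.W, Wk.alc Wk.len = affT ν u '' C.alcove ∧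
    v₀ ∈ affT ν u '' C.closedAlcove

/-- Two walks are equal as walks: same length and identical sequences of alcoves,
roots and levels. -/
def Equiv (Wk Wk' : Walk C) : Prop :=
  Wk.len = Wk'.len ∧ (∀ i ≤ Wk.len, Wk.alc i = Wk'.alc i) ∧
    ∀ i < Wk.len, Wk.root i = Wk'.root i ∧ Wk.lev i = Wk'.lev i

end Walk

end RootSystemCtx

/-!
For `x = t_ν w` with `w ∈ W₀` and `ν` integral, each positive root `α` maps the alcove `x(A)`
into a single open interval `(b, b + 1)` with `b = ⟨α, ν⟩ + ⌊w⁻¹α⌋_A ∈ ℤ`, where `⌊β⌋_A` is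
`0` or `-1` according to the sign of `β`. Hence `ℓ(x) = ∑_α |b_α|`, and the walls between `C`
and `x(A)` number `∑_α max(-b_α, 0)`. If `w` is a minimal coset representative for a dominant
`λ`, the sign of `w⁻¹α` is the sign of `⟨α, wλ⟩`: an inversion `γ` of `w` with `⟨γ, λ⟩ = 0`
would make `w s_γ` shorter. So every term of the identities is a sum over `Φ⁺` of
`⟨α, μ⟩`, `max(±⟨α, w''λ_d⟩, 0)` or `[⟨α, wμ⟩ < 0]`, and by the `W₀`-invariance of
`∑_{α ∈ Φ⁺} |⟨α, ·⟩|` the identities become linear relations between these sums.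
-/

section

variable {V : Type*} [AddCommGroup V] [Module ℝ V]

@[simp]
lemma dAct_apply (w : V ≃ₗ[ℝ] V) (α : Dual ℝ V) (v : V) : dAct w α v = α (w.symm v) := rfl

lemma dAct_inv_apply (w : V ≃ₗ[ℝ] V) (α : Dual ℝ V) (v : V) : dAct w⁻¹ α v = α (w v) := rfl

lemma dAct_one (α : Dual ℝ V) : dAct 1 α = α := rfl

lemma dAct_mul (w u : V ≃ₗ[ℝ] V) (α : Dual ℝ V) : dAct (w * u) α = dAct w (dAct u α) := rfl

lemma dAct_neg (w : V ≃ₗ[ℝ] V) (α : Dual ℝ V) : dAct w (-α) = -dAct w α := rfl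

lemma dAct_dAct_inv (w : V ≃ₗ[ℝ] V) (α : Dual ℝ V) : dAct w (dAct w⁻¹ α) = α := by
  rw [← dAct_mul, mul_inv_cancel, dAct_one]

lemma dAct_inv_dAct (w : V ≃ₗ[ℝ] V) (α : Dual ℝ V) : dAct w⁻¹ (dAct w α) = α := by
  rw [← dAct_mul, inv_mul_cancel, dAct_one]

lemma dAct_reflection {x : V} {f : Dual ℝ V} (h : f x = 2) (β : Dual ℝ V) :
    dAct (Module.reflection h) β = β - β x • f := by
  ext v
  simp only [dAct_apply, Module.reflection_symm, Module.reflection_apply, map_sub, map_smul,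
    smul_eq_mul, LinearMap.sub_apply, LinearMap.smul_apply]
  ring

lemma forall_apply_lt_iff {α : Dual ℝ V} {S : Set V} {a : ℤ} (hS : S.Nonempty)
    (ha : ∀ v ∈ S, (a : ℝ) < α v ∧ α v < a + 1) (n : ℤ) :
    (∀ v ∈ S, α v < n) ↔ a + 1 ≤ n := by
  obtain ⟨v₀, hv₀⟩ := hS
  refine ⟨fun h => ?_, fun h v hv => ?_⟩
  · have : (a : ℝ) < n := (ha v₀ hv₀).1.trans (h v₀ hv₀)
    exact_mod_cast this
  · have : ((a + 1 : ℤ) : ℝ) ≤ n := by exact_mod_cast h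
    push_cast at this
    linarith [(ha v hv).2]

lemma forall_lt_apply_iff {α : Dual ℝ V} {S : Set V} {a : ℤ} (hS : S.Nonempty)
    (ha : ∀ v ∈ S, (a : ℝ) < α v ∧ α v < a + 1) (n : ℤ) :
    (∀ v ∈ S, (n : ℝ) < α v) ↔ n ≤ a := by
  obtain ⟨v₀, hv₀⟩ := hS
  refine ⟨fun h => ?_, fun h v hv => ?_⟩
  · have : (n : ℝ) < a + 1 := (h v₀ hv₀).trans (ha v₀ hv₀).2
    have : n < a + 1 := by exact_mod_cast this
    omega
  · have : (n : ℝ) ≤ a := by exact_mod_cast h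
    linarith [(ha v hv).1]

lemma sepBy_iff_mem_Ioc {α : Dual ℝ V} {S T : Set V} {a b : ℤ} (hS : S.Nonempty)
    (hT : T.Nonempty) (ha : ∀ v ∈ S, (a : ℝ) < α v ∧ α v < a + 1)
    (hb : ∀ v ∈ T, (b : ℝ) < α v ∧ α v < b + 1) (n : ℤ) :
    SepBy α n S T ↔ n ∈ Ioc (min a b) (max a b) := by
  rw [SepBy, forall_apply_lt_iff hS ha, forall_lt_apply_iff hT hb, forall_lt_apply_iff hS ha,
    forall_apply_lt_iff hT hb, mem_Ioc, min_lt_iff, le_max_iff]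
  omega

end

namespace RootSystemCtx

variable {V : Type*} [AddCommGroup V] [Module ℝ V] [FiniteDimensional ℝ V] (C : RootSystemCtx V)

lemma mem_pos_or_neg_mem_pos {α : Dual ℝ V} (hα : α ∈ C.Φ) : α ∈ C.Pos ∨ -α ∈ C.Pos := by
  rcases C.pos_partition α hα with h | h
  exacts [Or.inl h.1, Or.inr h.1]

lemma neg_notMem_pos {α : Dual ℝ V} (hα : α ∈ C.Pos) : -α ∉ C.Pos := by
  rcases C.pos_partition α (C.pos_subset hα) with h | h
  exacts [h.2, absurd hα h.2]

lemma neg_mem_pos_of_notMem_pos {α : Dual ℝ V} (hα : α ∈ C.Φ) (h : α ∉ C.Pos) : -α ∈ C.Pos :=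
  (C.mem_pos_or_neg_mem_pos hα).resolve_left h

lemma neg_mem_pos_iff_notMem_pos {α : Dual ℝ V} (hα : α ∈ C.Φ) : -α ∈ C.Pos ↔ α ∉ C.Pos :=
  ⟨fun h hα' => C.neg_notMem_pos hα' h, C.neg_mem_pos_of_notMem_pos hα⟩

lemma neg_mem_Phi {α : Dual ℝ V} (hα : α ∈ C.Φ) : -α ∈ C.Φ := by
  have := C.root_reflect_mem α hα α hα
  rwa [C.coroot_self α hα, two_smul, sub_add_cancel_left] at this

lemma reflection_mem_W {γ : Dual ℝ V} (hγ : γ ∈ C.Φ) :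
    Module.reflection (C.coroot_self γ hγ) ∈ C.W := by
  rw [C.W_gen]
  exact Subgroup.subset_closure ⟨γ, hγ, fun v => Module.reflection_apply v _⟩

lemma dAct_mem_Phi_iff {w : V ≃ₗ[ℝ] V} (hw : w ∈ C.W) {α : Dual ℝ V} :
    dAct w α ∈ C.Φ ↔ α ∈ C.Φ := by
  let stab : Subgroup (V ≃ₗ[ℝ] V) :=
    { carrier := {g | ∀ α, dAct g α ∈ C.Φ ↔ α ∈ C.Φ}
      one_mem' := fun α => by rw [dAct_one]
      mul_mem' := fun hg hu α => by rw [dAct_mul, hg, hu]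
      inv_mem' := fun {g} hg α => by rw [← hg (dAct g⁻¹ α), dAct_dAct_inv] }
  suffices C.W ≤ stab from this hw α
  rw [C.W_gen, Subgroup.closure_le]
  rintro g ⟨γ, hγ, hg⟩ β
  obtain rfl : g = Module.reflection (C.coroot_self γ hγ) := LinearEquiv.ext hg
  have hrefl : ∀ β ∈ C.Φ, dAct (Module.reflection (C.coroot_self γ hγ)) β ∈ C.Φ := fun β hβ => by
    rw [dAct_reflection]
    exact C.root_reflect_mem γ hγ β hβ
  refine ⟨fun h => ?_, hrefl β⟩
  have := hrefl _ h
  nth_rw 1 [← Module.reflection_inv] at this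
  rwa [dAct_inv_dAct] at this

lemma exists_forall_pos_apply : ∃ v : V, ∀ α ∈ C.Pos, 0 < α v := by
  obtain ⟨f, hf⟩ := Module.exists_dual_forall_apply_eq_one (v := id) C.delta_indep
  refine ⟨(Module.evalEquiv ℝ V).symm f, fun α hα => ?_⟩
  obtain ⟨c, hc⟩ := C.pos_of_delta α hα
  have hδ : ∀ δ ∈ C.Delta, δ ((Module.evalEquiv ℝ V).symm f) = 1 := fun δ hδ => by
    rw [Module.apply_evalEquiv_symm_apply]
    exact hf δ hδ
  have hval : α ((Module.evalEquiv ℝ V).symm f) = ∑ δ ∈ C.Delta, (c δ : ℝ) := by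
    rw [hc, LinearMap.sum_apply]
    exact sum_congr rfl fun δ hδ' => by simp [hδ δ hδ']
  obtain ⟨δ, hδD, hcδ⟩ : ∃ δ ∈ C.Delta, c δ ≠ 0 := by
    by_contra! h
    refine C.root_ne_zero α (C.pos_subset hα) (hc.trans (sum_eq_zero fun δ hδ => ?_))
    simp [h δ hδ]
  rw [hval]
  exact sum_pos' (fun _ _ => by positivity) ⟨δ, hδD, by positivity⟩

lemma mem_pos_of_pos_apply {v₁ : V} (hv₁ : ∀ α ∈ C.Pos, 0 < α v₁) {β : Dual ℝ V}
    (hβ : β ∈ C.Φ) (h : 0 < β v₁) : β ∈ C.Pos := by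
  refine (C.mem_pos_or_neg_mem_pos hβ).resolve_right fun hneg => ?_
  have := hv₁ _ hneg
  simp only [LinearMap.neg_apply] at this
  linarith

lemma alcove_nonempty : C.alcove.Nonempty := by
  obtain ⟨v₁, hv₁⟩ := C.exists_forall_pos_apply
  set s := ∑ α ∈ C.Pos, α v₁
  have hs : 0 < 1 + s := by linarith [sum_nonneg fun α hα => (hv₁ α hα).le]
  refine ⟨(1 + s)⁻¹ • v₁, fun α hα => ?_⟩
  have hαs : α v₁ ≤ s := single_le_sum (fun β hβ => (hv₁ β hβ).le) hα
  rw [map_smul, smul_eq_mul, inv_mul_eq_div]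
  exact ⟨div_pos (hv₁ α hα) hs, (div_lt_one hs).2 (by linarith)⟩

lemma exists_mem_chamber_apply_eq {α : Dual ℝ V} (hα : α ∈ C.Pos) {r : ℝ} (hr : 0 < r) :
    ∃ v ∈ C.chamber, α v = r := by
  obtain ⟨v₁, hv₁⟩ := C.exists_forall_pos_apply
  refine ⟨(r / α v₁) • v₁, fun β hβ => ?_, ?_⟩
  · rw [map_smul, smul_eq_mul]
    exact mul_pos (div_pos hr (hv₁ α hα)) (hv₁ β hβ)
  · rw [map_smul, smul_eq_mul, div_mul_cancel₀ _ (hv₁ α hα).ne']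

lemma rho_apply (v : V) : C.rho v = 2⁻¹ * ∑ α ∈ C.Pos, α v := by
  simp [rho, LinearMap.sum_apply]

lemma sum_Phi_eq_sum_pos {M : Type*} [AddCommMonoid M] (f : Dual ℝ V → M) :
    ∑ α ∈ C.Φ, f α = ∑ α ∈ C.Pos, (f α + f (-α)) := by
  classical
  rw [sum_add_distrib, ← sum_filter_add_sum_filter_not C.Φ (· ∈ C.Pos), filter_mem_eq_inter,
    inter_eq_right.2 C.pos_subset]
  congr 1
  refine sum_nbij' (fun α => -α) (fun α => -α) (fun α hα => ?_) (fun α hα => ?_)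
    (fun α _ => neg_neg α) (fun α _ => neg_neg α) (fun α _ => by rw [neg_neg])
  · rw [mem_filter] at hα
    exact C.neg_mem_pos_of_notMem_pos hα.1 hα.2
  · rw [mem_filter]
    exact ⟨C.neg_mem_Phi (C.pos_subset hα), C.neg_notMem_pos hα⟩

lemma sum_Phi_dAct {w : V ≃ₗ[ℝ] V} (hw : w ∈ C.W) {M : Type*} [AddCommMonoid M]
    (f : Dual ℝ V → M) : ∑ α ∈ C.Φ, f (dAct w α) = ∑ α ∈ C.Φ, f α :=
  sum_nbij' (dAct w) (dAct w⁻¹) (fun _ hα => (C.dAct_mem_Phi_iff hw).2 hα)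
    (fun _ hα => (C.dAct_mem_Phi_iff (inv_mem hw)).2 hα) (fun α _ => dAct_inv_dAct w α)
    (fun α _ => dAct_dAct_inv w α) (fun _ _ => rfl)

lemma sum_pos_abs_apply_weyl {w : V ≃ₗ[ℝ] V} (hw : w ∈ C.W) (v : V) :
    ∑ α ∈ C.Pos, |α (w v)| = ∑ α ∈ C.Pos, |α v| := by
  have key := C.sum_Phi_dAct (inv_mem hw) fun α => |α v|
  simp only [dAct_inv_apply, sum_Phi_eq_sum_pos, LinearMap.neg_apply, abs_neg, ← two_mul,
    ← mul_sum] at key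
  linarith

lemma mem_invSet {w : V ≃ₗ[ℝ] V} {γ : Dual ℝ V} :
    γ ∈ C.invSet w ↔ γ ∈ C.Pos ∧ -dAct w γ ∈ C.Pos := by
  classical
  simp [invSet]

lemma dAct_mem_pos_of_notMem_invSet {w : V ≃ₗ[ℝ] V} (hw : w ∈ C.W) {γ : Dual ℝ V}
    (hγ : γ ∈ C.Pos) (h : γ ∉ C.invSet w) : dAct w γ ∈ C.Pos :=
  (C.mem_pos_or_neg_mem_pos ((C.dAct_mem_Phi_iff hw).2 (C.pos_subset hγ))).resolve_right
    fun hneg => h (C.mem_invSet.2 ⟨hγ, hneg⟩)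

lemma neg_dAct_mem_invSet_inv {w : V ≃ₗ[ℝ] V} {γ : Dual ℝ V} (hγ : γ ∈ C.invSet w) :
    -dAct w γ ∈ C.invSet w⁻¹ := by
  rw [mem_invSet] at hγ ⊢
  rwa [dAct_neg, dAct_inv_dAct, neg_neg, and_comm]

lemma sum_invSet_inv {M : Type*} [AddCommMonoid M] (w : V ≃ₗ[ℝ] V) (f : Dual ℝ V → M) :
    ∑ α ∈ C.invSet w⁻¹, f α = ∑ γ ∈ C.invSet w, f (-dAct w γ) := by
  refine (sum_nbij' (fun γ => -dAct w γ) (fun α => -dAct w⁻¹ α)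
    (fun _ hγ => C.neg_dAct_mem_invSet_inv hγ) (fun α hα => ?_)
    (fun γ _ => by rw [dAct_neg, dAct_inv_dAct, neg_neg])
    (fun α _ => by rw [dAct_neg, dAct_dAct_inv, neg_neg]) (fun _ _ => rfl)).symm
  simpa using C.neg_dAct_mem_invSet_inv (w := w⁻¹) hα

lemma len_inv (w : V ≃ₗ[ℝ] V) : C.len w⁻¹ = C.len w := by
  rw [len, len, card_eq_sum_ones, card_eq_sum_ones]
  exact C.sum_invSet_inv w fun _ => 1

-- `u` maps `N(wu) \ N(u)` onto `N(w) \ N(u⁻¹)`, and `-u` maps `N(wu) ∩ N(u)` onto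
-- `N(u⁻¹) \ N(w)`.
open Classical in
lemma len_mul {w u : V ≃ₗ[ℝ] V} (hw : w ∈ C.W) (hu : u ∈ C.W) :
    C.len (w * u) = #(C.invSet w \ C.invSet u⁻¹) + #(C.invSet u⁻¹ \ C.invSet w) := by
  rw [len, ← card_inter_add_card_sdiff (C.invSet (w * u)) (C.invSet u), add_comm]
  congr 1
  · refine card_nbij' (dAct u) (dAct u⁻¹) (fun β hβ => ?_) (fun η hη => ?_)
      (fun β _ => dAct_inv_dAct u β) (fun η _ => dAct_dAct_inv u η)
    · simp only [coe_sdiff, Set.mem_sdiff, mem_coe, mem_invSet, dAct_mul, not_and] at hβ ⊢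
      have hpos := C.dAct_mem_pos_of_notMem_invSet hu hβ.1.1 (by rw [mem_invSet]; tauto)
      exact ⟨⟨hpos, hβ.1.2⟩, fun _ => by rw [dAct_inv_dAct]; exact C.neg_notMem_pos hβ.1.1⟩
    · simp only [coe_sdiff, Set.mem_sdiff, mem_coe, mem_invSet, dAct_mul, not_and] at hη ⊢
      have hpos := C.dAct_mem_pos_of_notMem_invSet (inv_mem hu) hη.1.1 (by rw [mem_invSet]; tauto)
      rw [dAct_dAct_inv]
      exact ⟨⟨hpos, hη.1.2⟩, fun _ => C.neg_notMem_pos hη.1.1⟩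
  · refine card_nbij' (fun β => -dAct u β) (fun η => -dAct u⁻¹ η) (fun β hβ => ?_)
      (fun η hη => ?_) (fun β _ => by simp [dAct_neg, dAct_inv_dAct])
      (fun η _ => by simp [dAct_neg, dAct_dAct_inv])
    · simp only [coe_inter, coe_sdiff, Set.mem_inter_iff, Set.mem_sdiff, mem_coe, mem_invSet,
        dAct_mul, dAct_neg, dAct_inv_dAct, neg_neg, not_and] at hβ ⊢
      exact ⟨⟨hβ.2.2, hβ.1.1⟩, fun _ h => C.neg_notMem_pos hβ.1.2 (by rwa [neg_neg])⟩
    · simp only [coe_inter, coe_sdiff, Set.mem_inter_iff, Set.mem_sdiff, mem_coe, mem_invSet,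
        dAct_mul, dAct_neg, dAct_dAct_inv, neg_neg, not_and] at hη ⊢
      have hpos := C.dAct_mem_pos_of_notMem_invSet hw hη.1.1 (by rw [mem_invSet]; tauto)
      exact ⟨⟨hη.1.2, hpos⟩, hη.1.2, hη.1.1⟩

-- `β + (-s_γ β) = ⟨β, γ^∨⟩ γ` with `⟨β, γ^∨⟩ > 0`, and `w` makes `γ` negative.
lemma mem_invSet_or_neg_dAct_reflection_mem_invSet {w : V ≃ₗ[ℝ] V} (hw : w ∈ C.W)
    {γ : Dual ℝ V} (hγ : γ ∈ C.Φ) (hγw : γ ∈ C.invSet w) {β : Dual ℝ V}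
    (hβ : β ∈ C.invSet (Module.reflection (C.coroot_self γ hγ))) :
    β ∈ C.invSet w ∨ -dAct (Module.reflection (C.coroot_self γ hγ)) β ∈ C.invSet w := by
  obtain ⟨v₁, hv₁⟩ := C.exists_forall_pos_apply
  rw [mem_invSet, dAct_reflection] at hβ
  rw [mem_invSet] at hγw
  rw [mem_invSet, mem_invSet, dAct_reflection]
  set c := β (C.coroot γ)
  set v' := w.symm v₁
  have hβv₁ := hv₁ β hβ.1
  have hσv₁ := hv₁ _ hβ.2
  have hγv₁ := hv₁ γ hγw.1
  have hγv' : γ v' < 0 := by simpa [v'] using hv₁ _ hγw.2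
  simp only [LinearMap.neg_apply, LinearMap.sub_apply, LinearMap.smul_apply, smul_eq_mul]
    at hσv₁
  have hc : 0 < c := by nlinarith
  have hinv : ∀ x ∈ C.Φ, x v' < 0 → -dAct w x ∈ C.Pos := fun x hx hxv' =>
    C.mem_pos_of_pos_apply hv₁ (C.neg_mem_Phi ((C.dAct_mem_Phi_iff hw).2 hx))
      (by simpa [v'] using hxv')
  have hsum : β v' + (-(β - c • γ)) v' = c * γ v' := by simp
  by_cases hβv' : β v' < 0
  · exact Or.inl ⟨hβ.1, hinv β (C.pos_subset hβ.1) hβv'⟩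
  · refine Or.inr ⟨hβ.2, hinv _ (C.pos_subset hβ.2) ?_⟩
    nlinarith

-- With `S = N(w) ∩ N(s_γ)`, `len_mul` gives `ℓ(w s_γ) = ℓ(w) + #N(s_γ) - 2 #S`. The involution
-- `σ = -s_γ` of `N(s_γ)` fixes `γ ∈ S` and each of its orbits meets `S`, so `#N(s_γ) < 2 #S`.
open Classical in
lemma len_mul_reflection_lt {w : V ≃ₗ[ℝ] V} (hw : w ∈ C.W) {γ : Dual ℝ V} (hγ : γ ∈ C.Φ)
    (hγw : γ ∈ C.invSet w) : C.len (w * Module.reflection (C.coroot_self γ hγ)) < C.len w := by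
  rw [C.len_mul hw (C.reflection_mem_W hγ), Module.reflection_inv, len]
  set t := Module.reflection (C.coroot_self γ hγ)
  have htt : t⁻¹ = t := Module.reflection_inv _
  set N := C.invSet t
  set S := C.invSet w ∩ N
  set σ : Dual ℝ V → Dual ℝ V := fun β => -dAct t β
  have hσσ : ∀ β, σ (σ β) = β := fun β => by
    simp only [σ, dAct_neg, neg_neg]
    nth_rw 1 [← htt]
    exact dAct_inv_dAct t β
  have hσγ : σ γ = γ := by
    simp only [σ, t, dAct_reflection, C.coroot_self γ hγ]
    module
  have hγN : γ ∈ N := C.mem_invSet.2 ⟨(C.mem_invSet.1 hγw).1, by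
    change σ γ ∈ C.Pos
    rw [hσγ]
    exact (C.mem_invSet.1 hγw).1⟩
  have hσN : ∀ β ∈ N, σ β ∈ N := fun β hβ =>
    C.mem_invSet.2 ⟨(C.mem_invSet.1 hβ).2, by simpa [σ, hσσ] using (C.mem_invSet.1 hβ).1⟩
  have hcover : N ⊆ S ∪ S.image σ := fun β hβ => by
    rcases C.mem_invSet_or_neg_dAct_reflection_mem_invSet hw hγ hγw hβ with h | h
    · exact mem_union_left _ (mem_inter.2 ⟨h, hβ⟩)
    · exact mem_union_right _ (mem_image.2 ⟨σ β, mem_inter.2 ⟨h, hσN β hβ⟩, hσσ β⟩)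
  have hγS : γ ∈ S ∩ S.image σ :=
    mem_inter.2 ⟨mem_inter.2 ⟨hγw, hγN⟩, mem_image.2 ⟨γ, mem_inter.2 ⟨hγw, hγN⟩, hσγ⟩⟩
  have h1 := card_union_add_card_inter S (S.image σ)
  have h2 := card_le_card hcover
  have h3 : (S.image σ).card ≤ S.card := card_image_le
  have h4 : 0 < (S ∩ S.image σ).card := card_pos.2 ⟨γ, hγS⟩
  have h5 : #(C.invSet w \ N) + #S = #(C.invSet w) := card_sdiff_add_card_inter _ _
  have h6 : #(N \ C.invSet w) + #S = #N := by
    rw [show S = N ∩ C.invSet w from inter_comm _ _]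
    exact card_sdiff_add_card_inter _ _
  omega

lemma sepCount_eq_sum_card {S T : Set V} (I : Dual ℝ V → Finset ℤ)
    (h : ∀ α ∈ C.Pos, ∀ n : ℤ, SepBy α n S T ↔ n ∈ I α) :
    C.sepCount S T = ∑ α ∈ C.Pos, #(I α) := by
  classical
  have hset : {p : Dual ℝ V × ℤ | p.1 ∈ C.Pos ∧ SepBy p.1 p.2 S T}
      = (C.Pos.sigma I).map (Equiv.sigmaEquivProd _ _).toEmbedding := by
    ext ⟨α, n⟩
    simp only [coe_map, Set.mem_image, mem_coe, mem_sigma, Sigma.exists,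
      Equiv.coe_toEmbedding, Equiv.sigmaEquivProd_apply, Prod.mk.injEq]
    constructor
    · rintro ⟨hα, hsep⟩
      exact ⟨α, n, ⟨hα, (h α hα n).1 hsep⟩, rfl, rfl⟩
    · rintro ⟨α, n, ⟨hα, hn⟩, rfl, rfl⟩
      exact ⟨hα, (h α hα n).2 hn⟩
  rw [sepCount, hset, Set.ncard_coe_finset, card_map, card_sigma]

lemma affLen_eq_sum_abs (x : V → V) (b : Dual ℝ V → ℤ)
    (hb : ∀ α ∈ C.Pos, ∀ v ∈ C.alcove, (b α : ℝ) < α (x v) ∧ α (x v) < b α + 1) :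
    (C.affLen x : ℝ) = ∑ α ∈ C.Pos, |(b α : ℝ)| := by
  have hbT : ∀ α ∈ C.Pos, ∀ v ∈ x '' C.alcove, (b α : ℝ) < α v ∧ α v < b α + 1 := by
    rintro α hα _ ⟨v, hv, rfl⟩
    exact hb α hα v hv
  have h0 : ∀ α ∈ C.Pos, ∀ v ∈ C.alcove, ((0 : ℤ) : ℝ) < α v ∧ α v < (0 : ℤ) + 1 := by
    simpa using fun α hα v hv => hv α hα
  rw [affLen, C.sepCount_eq_sum_card _ fun α hα =>
    sepBy_iff_mem_Ioc C.alcove_nonempty (C.alcove_nonempty.image x) (h0 α hα) (hbT α hα),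
    Nat.cast_sum]
  refine sum_congr rfl fun α _ => ?_
  rw [Int.card_Ioc, max_sub_min_eq_abs, sub_zero, ← Int.cast_natCast,
    Int.toNat_of_nonneg (abs_nonneg _), Int.cast_abs]

lemma sepBy_chamber_iff_mem_Ioc {α : Dual ℝ V} (hα : α ∈ C.Pos) {T : Set V} {b : ℤ}
    (hT : T.Nonempty) (hb : ∀ v ∈ T, (b : ℝ) < α v ∧ α v < b + 1) (n : ℤ) :
    SepBy α n C.chamber T ↔ n ∈ Ioc b 0 := by
  have hlt : ¬∀ v ∈ C.chamber, α v < n := fun h => by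
    obtain ⟨v, hv, hαv⟩ := C.exists_mem_chamber_apply_eq hα (r := |(n : ℝ)| + 1) (by positivity)
    linarith [h v hv, le_abs_self (n : ℝ)]
  have hgt : (∀ v ∈ C.chamber, (n : ℝ) < α v) ↔ n ≤ 0 := by
    refine ⟨fun h => ?_, fun h v hv => ?_⟩
    · obtain ⟨v, hv, hαv⟩ := C.exists_mem_chamber_apply_eq hα one_pos
      have : (n : ℝ) < 1 := hαv ▸ h v hv
      have : n < 1 := by exact_mod_cast this
      omega
    · have : (n : ℝ) ≤ 0 := by exact_mod_cast h
      linarith [hv α hα]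
  rw [SepBy, forall_lt_apply_iff hT hb, forall_apply_lt_iff hT hb, hgt, mem_Ioc]
  simp only [hlt, false_and, false_or]
  omega

lemma sepCount_chamber_eq_sum {T : Set V} (hT : T.Nonempty) (b : Dual ℝ V → ℤ)
    (hb : ∀ α ∈ C.Pos, ∀ v ∈ T, (b α : ℝ) < α v ∧ α v < b α + 1) :
    (C.sepCount C.chamber T : ℝ) = ∑ α ∈ C.Pos, max (-(b α : ℝ)) 0 := by
  rw [C.sepCount_eq_sum_card _ fun α hα => C.sepBy_chamber_iff_mem_Ioc hα hT (hb α hα),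
    Nat.cast_sum]
  refine sum_congr rfl fun α _ => ?_
  rw [Int.card_Ioc, ← Int.cast_natCast, Int.toNat_eq_max]
  push_cast
  ring_nf

open Classical in
noncomputable def floorOnAlcove (β : Dual ℝ V) : ℤ := if β ∈ C.Pos then 0 else -1

lemma floorOnAlcove_lt_apply {β : Dual ℝ V} (hβ : β ∈ C.Φ) {v : V} (hv : v ∈ C.alcove) :
    (C.floorOnAlcove β : ℝ) < β v ∧ β v < C.floorOnAlcove β + 1 := by
  unfold floorOnAlcove
  split_ifs with h
  · simpa using hv β h
  · have := hv _ (C.neg_mem_pos_of_notMem_pos hβ h)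
    simp only [LinearMap.neg_apply] at this
    push_cast
    constructor <;> linarith

lemma lt_apply_affT {w : V ≃ₗ[ℝ] V} (hw : w ∈ C.W) (ν : V)
    {α : Dual ℝ V} (hα : α ∈ C.Pos) {v : V} (hv : v ∈ C.alcove) :
    α ν + C.floorOnAlcove (dAct w⁻¹ α) < α (affT ν w v) ∧
      α (affT ν w v) < α ν + C.floorOnAlcove (dAct w⁻¹ α) + 1 := by
  have h := C.floorOnAlcove_lt_apply ((C.dAct_mem_Phi_iff (inv_mem hw)).2 (C.pos_subset hα)) hv
  simp only [affT, map_add, dAct_inv_apply] at h ⊢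
  constructor <;> linarith

section

variable {C}

lemma IsIntegral.cast_round_apply {lam : V} (hlam : C.IsIntegral lam) {α : Dual ℝ V}
    (hα : α ∈ C.Φ) : (round (α lam) : ℝ) = α lam := by
  obtain ⟨n, hn⟩ := hlam α hα
  rw [hn, round_intCast]

lemma IsIntegral.apply_weyl {lam : V} (hlam : C.IsIntegral lam) {w : V ≃ₗ[ℝ] V}
    (hw : w ∈ C.W) : C.IsIntegral (w lam) := fun α hα =>
  hlam (dAct w⁻¹ α) ((C.dAct_mem_Phi_iff (inv_mem hw)).2 hα)

lemma IsIntegral.apply_le_neg_one {lam : V} (hlam : C.IsIntegral lam) {α : Dual ℝ V}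
    (hα : α ∈ C.Φ) (h : α lam < 0) : α lam ≤ -1 := by
  obtain ⟨n, hn⟩ := hlam α hα
  rw [hn] at h ⊢
  have : n < 0 := by exact_mod_cast h
  exact_mod_cast Int.le_sub_one_of_lt this

lemma IsIntegral.neg {lam : V} (hlam : C.IsIntegral lam) : C.IsIntegral (-lam) := fun α hα => by
  obtain ⟨n, hn⟩ := hlam α hα
  exact ⟨-n, by rw [map_neg, hn, Int.cast_neg]⟩

lemma IsDominant.sum_pos_abs_apply_weyl {lam : V} (hlam : C.IsDominant lam) {w : V ≃ₗ[ℝ] V}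
    (hw : w ∈ C.W) : ∑ α ∈ C.Pos, |α (w lam)| = ∑ α ∈ C.Pos, α lam := by
  rw [C.sum_pos_abs_apply_weyl hw]
  exact sum_congr rfl fun α hα => abs_of_nonneg (hlam α hα)

end

lemma affLen_affT {w : V ≃ₗ[ℝ] V} (hw : w ∈ C.W) {ν : V} (hν : C.IsIntegral ν) :
    (C.affLen (affT ν w) : ℝ) = ∑ α ∈ C.Pos, |α ν + C.floorOnAlcove (dAct w⁻¹ α)| := by
  rw [C.affLen_eq_sum_abs _ (fun α => round (α ν) + C.floorOnAlcove (dAct w⁻¹ α))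
    fun α hα v hv => ?_]
  · refine sum_congr rfl fun α hα => ?_
    rw [Int.cast_add, hν.cast_round_apply (C.pos_subset hα)]
  · rw [Int.cast_add, hν.cast_round_apply (C.pos_subset hα)]
    exact C.lt_apply_affT hw ν hα hv

lemma sepCount_chamber_affT {w : V ≃ₗ[ℝ] V} (hw : w ∈ C.W) {ν : V} (hν : C.IsIntegral ν) :
    (C.sepCount C.chamber (affT ν w '' C.alcove) : ℝ)
      = ∑ α ∈ C.Pos, max (-(α ν + C.floorOnAlcove (dAct w⁻¹ α))) 0 := by
  rw [C.sepCount_chamber_eq_sum (C.alcove_nonempty.image _)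
    (fun α => round (α ν) + C.floorOnAlcove (dAct w⁻¹ α)) ?_]
  · refine sum_congr rfl fun α hα => ?_
    rw [Int.cast_add, hν.cast_round_apply (C.pos_subset hα)]
  · rintro α hα _ ⟨v, hv, rfl⟩
    rw [Int.cast_add, hν.cast_round_apply (C.pos_subset hα)]
    exact C.lt_apply_affT hw ν hα hv

lemma affLen_translation {μ : V} (hμ : C.IsIntegral μ) (hμdom : C.IsDominant μ) :
    (C.affLen (affT μ 1) : ℝ) = ∑ α ∈ C.Pos, α μ := by
  rw [C.affLen_affT (one_mem _) hμ]
  refine sum_congr rfl fun α hα => ?_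
  rw [inv_one, dAct_one, floorOnAlcove, if_pos hα, Int.cast_zero, add_zero,
    abs_of_nonneg (hμdom α hα)]

section

variable {C}

lemma IsMinRep.apply_ne_zero {w : V ≃ₗ[ℝ] V} {lam : V} (hw : C.IsMinRep w lam)
    {γ : Dual ℝ V} (hγw : γ ∈ C.invSet w) : γ lam ≠ 0 := by
  intro h0
  have hγ := C.pos_subset (C.mem_invSet.1 hγw).1
  have hfix : Module.reflection (C.coroot_self γ hγ) lam = lam := by
    simp [Module.reflection_apply, h0]
  have := hw.2 _ (C.reflection_mem_W hγ) hfix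
  have := C.len_mul_reflection_lt hw.1 hγ hγw
  omega

lemma IsMinRep.dAct_inv_mem_pos_iff {w : V ≃ₗ[ℝ] V} {lam : V} (hw : C.IsMinRep w lam)
    (hlam : C.IsDominant lam) {α : Dual ℝ V} (hα : α ∈ C.Pos) :
    dAct w⁻¹ α ∈ C.Pos ↔ 0 ≤ α (w lam) := by
  refine ⟨fun h => hlam _ h, fun h => ?_⟩
  by_contra hn
  have hΦ := (C.dAct_mem_Phi_iff (inv_mem hw.1)).2 (C.pos_subset hα)
  have hγ : -dAct w⁻¹ α ∈ C.invSet w := by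
    rw [mem_invSet, dAct_neg, dAct_dAct_inv, neg_neg]
    exact ⟨C.neg_mem_pos_of_notMem_pos hΦ hn, hα⟩
  have hle := hlam _ (C.mem_invSet.1 hγ).1
  have hne := hw.apply_ne_zero hγ
  simp only [LinearMap.neg_apply, dAct_inv_apply] at hle hne
  exact hne (by linarith)

lemma IsMinRep.invSet_inv_eq_filter {w : V ≃ₗ[ℝ] V} {lam : V} (hw : C.IsMinRep w lam)
    (hlam : C.IsDominant lam) : C.invSet w⁻¹ = C.Pos.filter fun α => α (w lam) < 0 := by
  ext α
  rw [mem_invSet, mem_filter]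
  refine and_congr_right fun hα => ?_
  rw [C.neg_mem_pos_iff_notMem_pos ((C.dAct_mem_Phi_iff (inv_mem hw.1)).2 (C.pos_subset hα)),
    hw.dAct_inv_mem_pos_iff hlam hα, not_le]

lemma IsMinRep.len_eq_card_filter {w : V ≃ₗ[ℝ] V} {lam : V} (hw : C.IsMinRep w lam)
    (hlam : C.IsDominant lam) : C.len w = #(C.Pos.filter fun α => α (w lam) < 0) := by
  rw [← C.len_inv, len, hw.invSet_inv_eq_filter hlam]

lemma IsMinRep.sum_invSet_apply {w : V ≃ₗ[ℝ] V} {lam : V} (hw : C.IsMinRep w lam)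
    (hlam : C.IsDominant lam) :
    ∑ γ ∈ C.invSet w, γ lam = ∑ α ∈ C.Pos, max (-α (w lam)) 0 := by
  have key := C.sum_invSet_inv w fun α => -α (w lam)
  simp only [LinearMap.neg_apply, neg_neg, dAct_apply, LinearEquiv.symm_apply_apply] at key
  rw [← key, hw.invSet_inv_eq_filter hlam, sum_filter]
  refine sum_congr rfl fun α _ => ?_
  split_ifs with h
  · exact (max_eq_left (by linarith)).symm
  · exact (max_eq_right (by linarith)).symm

lemma IsMinRep.floorOnAlcove_dAct_inv {w : V ≃ₗ[ℝ] V} {lam : V} (hw : C.IsMinRep w lam)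
    (hlam : C.IsDominant lam) {α : Dual ℝ V} (hα : α ∈ C.Pos) :
    C.floorOnAlcove (dAct w⁻¹ α) = if α (w lam) < 0 then -1 else 0 := by
  unfold floorOnAlcove
  by_cases h : α (w lam) < 0
  · rw [if_neg (by rwa [hw.dAct_inv_mem_pos_iff hlam hα, not_le]), if_pos h]
  · rw [if_pos ((hw.dAct_inv_mem_pos_iff hlam hα).2 (not_lt.1 h)), if_neg h]

lemma IsMinRep.affLen_affT_neg {w : V ≃ₗ[ℝ] V} {lam : V} (hw : C.IsMinRep w lam)
    (hint : C.IsIntegral lam) (hdom : C.IsDominant lam) :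
    (C.affLen (affT (-(w lam)) w) : ℝ) = ∑ α ∈ C.Pos, α lam - C.len w := by
  rw [C.affLen_affT hw.1 (hint.apply_weyl hw.1).neg, hw.len_eq_card_filter hdom,
    ← hdom.sum_pos_abs_apply_weyl hw.1, ← sum_boole, ← sum_sub_distrib]
  refine sum_congr rfl fun α hα => ?_
  rw [map_neg, hw.floorOnAlcove_dAct_inv hdom hα]
  split_ifs with h
  · have := (hint.apply_weyl hw.1).apply_le_neg_one (C.pos_subset hα) h
    rw [abs_of_nonneg (by push_cast; linarith), abs_of_neg h]
    push_cast
    ring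
  · rw [Int.cast_zero, add_zero, abs_neg, sub_zero]

lemma IsMinRep.sepCount_chamber_affT_neg {w : V ≃ₗ[ℝ] V} {lam : V} (hw : C.IsMinRep w lam)
    (hint : C.IsIntegral lam) (hdom : C.IsDominant lam) :
    (C.sepCount C.chamber (affT (-(w lam)) w '' C.alcove) : ℝ)
      = ∑ α ∈ C.Pos, max (α (w lam)) 0 := by
  rw [C.sepCount_chamber_affT hw.1 (hint.apply_weyl hw.1).neg]
  refine sum_congr rfl fun α hα => ?_
  rw [map_neg, hw.floorOnAlcove_dAct_inv hdom hα]
  split_ifs with h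
  · have := (hint.apply_weyl hw.1).apply_le_neg_one (C.pos_subset hα) h
    rw [max_eq_right (by push_cast; linarith), max_eq_right h.le]
  · rw [Int.cast_zero, add_zero, neg_neg]

end

end RootSystemCtx

theorem appendix_length_identities_general
    {V : Type*} [AddCommGroup V] [Module ℝ V] [FiniteDimensional ℝ V]
    (C : RootSystemCtx V) (μ : V)
    (hμint : C.IsIntegral μ) (hμdom : C.IsDominant μ)
    (lam : V) (hlint : C.IsIntegral lam)
    (lamd : V) (hlamd_dom : C.IsDominant lamd)
    (w'' : V ≃ₗ[ℝ] V) (hw'' : C.IsMinRep w'' lamd) (hlam_eq : lam = w'' lamd) :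
    C.rho (μ + lam)
        = (C.affLen (affT μ 1) : ℝ) - C.rho (μ - lamd) - ∑ α ∈ C.invSet w'', α lamd ∧
    C.rho (μ + lam)
        = C.rho (μ - lamd)
          + (C.sepCount C.chamber (affT (-(w'' lamd)) w'' '' C.alcove) : ℝ) ∧
    ∀ w : V ≃ₗ[ℝ] V, C.IsMinRep w μ →
      (C.affLen (affT (-(w μ)) w) : ℝ) - C.rho (μ + lam)
        = C.rho (μ - lamd) + (∑ α ∈ C.invSet w'', α lamd) - (C.len w : ℝ) := by
  subst hlam_eq
  have hlamd : C.IsIntegral lamd := by simpa using hlint.apply_weyl (inv_mem hw''.1)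
  have hsplit : ∑ α ∈ C.Pos, α (w'' lamd)
      = ∑ α ∈ C.Pos, max (α (w'' lamd)) 0 - ∑ α ∈ C.Pos, max (-α (w'' lamd)) 0 := by
    rw [← sum_sub_distrib]
    exact sum_congr rfl fun α _ => (max_zero_sub_max_neg_zero_eq_self _).symm
  have habs : ∑ α ∈ C.Pos, α lamd
      = ∑ α ∈ C.Pos, max (α (w'' lamd)) 0 + ∑ α ∈ C.Pos, max (-α (w'' lamd)) 0 := by
    rw [← hlamd_dom.sum_pos_abs_apply_weyl hw''.1, ← sum_add_distrib]
    exact sum_congr rfl fun α _ => (max_zero_add_max_neg_zero_eq_abs_self _).symm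
  simp only [C.rho_apply, map_add, map_sub, sum_add_distrib, sum_sub_distrib,
    hw''.sum_invSet_apply hlamd_dom, C.affLen_translation hμint hμdom,
    hw''.sepCount_chamber_affT_neg hlamd hlamd_dom]
  refine ⟨by linarith, by linarith, fun w hw => ?_⟩
  rw [hw.affLen_affT_neg hμint hμdom]
  linarith

/-- Let `μ` be a dominant integral coweight and `λ` an integral
coweight with `μ − u(λ)` a `ℤ_{≥0}`-combination of positive coroots for every
`u ∈ W₀`.  Let `λ_d` be the dominant element of `W₀λ`, `λ = w''(λ_d)` with `w''` the
minimal coset representative, `ℓ^{λ_d}(w'') = Σ_{α ∈ Φ⁺, w''(α) ∈ −Φ⁺} ⟨α, λ_d⟩`,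
`ht(μ − λ_d) = ⟨ρ, μ − λ_d⟩`.  Then
`⟨ρ, μ + λ⟩ = ℓ(t_μ) − ht(μ − λ_d) − ℓ^{λ_d}(w'') = ht(μ − λ_d) + N_{λ_d,w''}`, and
for every minimal coset representative `w` for `μ`,
`ℓ(x_w) − ⟨ρ, μ + λ⟩ = ht(μ − λ_d) + ℓ^{λ_d}(w'') − ℓ(w)`. -/
theorem appendix_length_identities
    {V : Type*} [AddCommGroup V] [Module ℝ V] [FiniteDimensional ℝ V]
    (C : RootSystemCtx V) (μ : V)
    (hμint : C.IsIntegral μ) (hμdom : C.IsDominant μ)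
    (lam : V) (hlint : C.IsIntegral lam)
    (hcomb : ∀ u ∈ C.W, ∃ c : Module.Dual ℝ V → ℕ,
      μ - u lam = ∑ α ∈ C.Pos, (c α : ℝ) • C.coroot α)
    (lamd : V) (hlamd_dom : C.IsDominant lamd)
    (hlamd_orb : ∃ u ∈ C.W, u lam = lamd)
    (w'' : V ≃ₗ[ℝ] V) (hw'' : C.IsMinRep w'' lamd) (hlam_eq : lam = w'' lamd) :
    C.rho (μ + lam)
        = (C.affLen (affT μ 1) : ℝ) - C.rho (μ - lamd) - ∑ α ∈ C.invSet w'', α lamd ∧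
    C.rho (μ + lam)
        = C.rho (μ - lamd)
          + (C.sepCount C.chamber (affT (-(w'' lamd)) w'' '' C.alcove) : ℝ) ∧
    ∀ w : V ≃ₗ[ℝ] V, C.IsMinRep w μ →
      (C.affLen (affT (-(w μ)) w) : ℝ) - C.rho (μ + lam)
        = C.rho (μ - lamd) + (∑ α ∈ C.invSet w'', α lamd) - (C.len w : ℝ) :=
  appendix_length_identities_general C μ hμint hμdom lam hlint lamd hlamd_dom w'' hw'' hlam_eq
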